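/- arXiv:2303.06921 — 6 statements merged into one kernel-verified Lean document; each statement's English description precedes it below -/
import Mathlib

section
/- Let n ≥ 2 and S a semiring. Then M_n(S) has a unity if and only if S has both a zero and a unity. Moreover, in that case, the unity of M_n(S) is the matrix with 1_S on the diagonal and 0_S elsewhere. -/
/-- A semiring in the sense of the paper: associative `+` and `*`, `+` commutative,
`*` distributing over `+` from both sides; no zero or unity assumed. -/
class PSemiring (S : Type) extends AddCommSemigroup S, Semigroup S where
  left_distrib : ∀ a b c : S, a * (b + c) = a * b + a * c
  right_distrib : ∀ a b c : S, (a + b) * c = a * c + b * c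

section Defs
variable {T : Type} [Add T] [Mul T]

def MulAbsorbing (w : T) : Prop := ∀ a : T, a * w = w ∧ w * a = w
def AddAbsorbing (w : T) : Prop := ∀ a : T, a + w = w
def AddNeutral (w : T) : Prop := ∀ a : T, a + w = a
def BiAbsorbing (w : T) : Prop := MulAbsorbing w ∧ AddAbsorbing w
def IsZero (w : T) : Prop := MulAbsorbing w ∧ AddNeutral w
def IsUnity (w : T) : Prop := ∀ a : T, w * a = a ∧ a * w = a

def IsBiIdeal (I : Set T) : Prop :=
  I.Nonempty ∧ ∀ a ∈ I, ∀ s : T, a + s ∈ I ∧ a * s ∈ I ∧ s * a ∈ I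

def IsCongruence (r : T → T → Prop) : Prop :=
  Equivalence r ∧ (∀ a b c d : T, r a b → r c d → r (a + c) (b + d)) ∧
    (∀ a b c d : T, r a b → r c d → r (a * c) (b * d))

/-- The standard quasiordering on a semiring. -/
def leS (a b : T) : Prop := a = b ∨ ∃ c : T, a + c = b

/-- `addPow m b` is the `(m+1)`-fold sum `b + ⋯ + b`. -/
def addPow : ℕ → T → T
  | 0, b => b
  | m + 1, b => addPow m b + b

end Defs

def CongSimple (T : Type) [Add T] [Mul T] : Prop :=
  (∃ a b : T, a ≠ b) ∧
    ∀ r : T → T → Prop, IsCongruence r →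
      (∀ a b : T, r a b ↔ a = b) ∨ (∀ a b : T, r a b)

def BiIdealSimple (T : Type) [Add T] [Mul T] : Prop :=
  (∃ a b : T, a ≠ b) ∧
    ∀ I : Set T, IsBiIdeal I → (∃ w : T, I = {w}) ∨ I = Set.univ

def BiIdealFree (T : Type) [Add T] [Mul T] : Prop :=
  (∃ a b : T, a ≠ b) ∧ ∀ I : Set T, IsBiIdeal I → I = Set.univ

/-- Sum of a nonempty family indexed by `Fin (n+1)`. -/
def finSum {S : Type} [Add S] : ∀ {n : ℕ}, (Fin (n + 1) → S) → S
  | 0, f => f 0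
  | n + 1, f => finSum (fun i : Fin (n + 1) => f i.castSucc) + f (Fin.last (n + 1))

/-- `Mat n S` is the semiring of `(n+1) × (n+1)` matrices over `S`. -/
structure Mat (n : ℕ) (S : Type) where
  entry : Fin (n + 1) → Fin (n + 1) → S

instance {n : ℕ} {S : Type} [Add S] : Add (Mat n S) :=
  ⟨fun A B => ⟨fun i j => A.entry i j + B.entry i j⟩⟩

instance {n : ℕ} {S : Type} [Add S] [Mul S] : Mul (Mat n S) :=
  ⟨fun A B => ⟨fun i j => finSum (fun k => A.entry i k * B.entry k j)⟩⟩

/-- The constant matrix `ā`. -/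
def Mat.const (n : ℕ) {S : Type} (a : S) : Mat n S := ⟨fun _ _ => a⟩


/-
Distributivity pushes a scalar through the finite sums defining matrix products, so testing a unity
`E` of `M_n(S)` against suitable matrices reads off its row and column sums. Against constant
matrices, the row sum of `E` is a left and the column sum a right identity of `S`, hence they
coincide in a unity `e`. Against a constant matrix with one row (or column) perturbed by `c`, an
off-diagonal entry `z` of `E` satisfies `a + z * c = a` and `a + c * z = a`; with `c = e` this
makes `z` additively neutral, and then `z * c` and `c * z` are neutral too, so both equal `z`.
This needs `n ≥ 2`, for an off-diagonal entry to exist. Conversely the diagonal matrix is a unity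
as soon as `z` kills every off-diagonal term of the sums.
-/

section Magma

variable {T : Type}

theorem finSum_one [Add T] (f : Fin 1 → T) : finSum f = f 0 := rfl

theorem finSum_succ [Add T] {n : ℕ} (f : Fin (n + 2) → T) :
    finSum f = finSum (fun i : Fin (n + 1) => f i.castSucc) + f (Fin.last (n + 1)) := rfl

theorem AddNeutral.unique [AddCommMagma T] [Mul T] {u w : T} (hu : AddNeutral u)
    (hw : AddNeutral w) : u = w := by
  rw [← hw u, add_comm, hu w]

theorem isUnity_of_mul_eq_self [Add T] [Mul T] {l r : T} (hl : ∀ a, l * a = a)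
    (hr : ∀ a, a * r = a) : IsUnity l := by
  have hlr : l = r := (hr l).symm.trans (hl r)
  exact fun a => ⟨hl a, hlr ▸ hr a⟩

end Magma

section Semiring

variable {S : Type} [PSemiring S]

theorem finSum_mul {n : ℕ} (f : Fin (n + 1) → S) (a : S) :
    finSum f * a = finSum (fun k => f k * a) := by
  induction n with
  | zero => rfl
  | succ n ih => rw [finSum_succ, finSum_succ, PSemiring.right_distrib, ih]

theorem mul_finSum {n : ℕ} (f : Fin (n + 1) → S) (a : S) :
    a * finSum f = finSum (fun k => a * f k) := by
  induction n with
  | zero => rfl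
  | succ n ih => rw [finSum_succ, finSum_succ, PSemiring.left_distrib, ih]

theorem finSum_ite_add {n : ℕ} (f g : Fin (n + 1) → S) (i : Fin (n + 1)) :
    finSum (fun k => if k = i then f k + g k else f k) = finSum f + g i := by
  induction n with
  | zero =>
    obtain rfl := Fin.fin_one_eq_zero i
    rw [finSum_one, finSum_one, if_pos rfl]
  | succ n ih =>
    induction i using Fin.lastCases with
    | last =>
      simp only [finSum_succ, (Fin.castSucc_lt_last _).ne, if_false, if_true, add_assoc]
    | cast j =>
      simp only [finSum_succ, Fin.castSucc_inj, (Fin.castSucc_lt_last j).ne', if_false,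
        ih, add_right_comm]

theorem finSum_const_of_addNeutral {z : S} (hz : AddNeutral z) {n : ℕ} :
    finSum (fun _ : Fin (n + 1) => z) = z := by
  induction n with
  | zero => rfl
  | succ n ih => rw [finSum_succ, ih, hz]

theorem finSum_ite_of_addNeutral {z : S} (hz : AddNeutral z) {n : ℕ} (i : Fin (n + 1)) (a : S) :
    finSum (fun k => if k = i then a else z) = a := by
  have h := finSum_ite_add (fun _ => z) (fun _ => a) i
  rwa [finSum_const_of_addNeutral hz (n := n), add_comm z a, hz a] at h

theorem isZero_of_add_mul_eq_self {z e : S} (he : IsUnity e) (hr : ∀ a c, a + z * c = a)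
    (hl : ∀ a c, a + c * z = a) : IsZero z := by
  have hz : AddNeutral z := fun a => by simpa only [(he z).2] using hr a e
  exact ⟨fun c => ⟨AddNeutral.unique (hl · c) hz, AddNeutral.unique (hr · c) hz⟩, hz⟩

end Semiring

namespace Mat

theorem ext {S : Type} {n : ℕ} {A B : Mat n S} (h : ∀ i j, A.entry i j = B.entry i j) :
    A = B := by
  cases A; cases B
  exact congrArg _ (funext₂ h)

theorem mul_entry {S : Type} [Add S] [Mul S] {n : ℕ} (A B : Mat n S) (i j : Fin (n + 1)) :
    (A * B).entry i j = finSum (fun k => A.entry i k * B.entry k j) := rfl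

variable {S : Type} [PSemiring S] {n : ℕ}

/-- Testing `E * A = A` on the matrix all of whose columns equal `v`. -/
theorem finSum_entry_mul_eq_of_left_unity {E : Mat n S} (hE : ∀ A, E * A = A)
    (v : Fin (n + 1) → S) (i : Fin (n + 1)) :
    finSum (fun k => E.entry i k * v k) = v i :=
  congrArg (·.entry i i) (hE ⟨fun k _ => v k⟩)

theorem finSum_mul_entry_eq_of_right_unity {E : Mat n S} (hE : ∀ A, A * E = A)
    (v : Fin (n + 1) → S) (j : Fin (n + 1)) :
    finSum (fun k => v k * E.entry k j) = v j :=
  congrArg (·.entry j j) (hE ⟨fun _ k => v k⟩)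

theorem add_entry_mul_eq_self {E : Mat n S} (hE : ∀ A, E * A = A) {i j : Fin (n + 1)}
    (hij : i ≠ j) (a c : S) : a + E.entry i j * c = a := by
  have h := finSum_entry_mul_eq_of_left_unity hE (fun k => if k = j then a + c else a) i
  simp only [mul_ite, PSemiring.left_distrib, finSum_ite_add, if_neg hij] at h
  rwa [finSum_entry_mul_eq_of_left_unity hE (fun _ => a) i] at h

theorem add_mul_entry_eq_self {E : Mat n S} (hE : ∀ A, A * E = A) {i j : Fin (n + 1)}
    (hij : i ≠ j) (a c : S) : a + c * E.entry i j = a := by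
  have h := finSum_mul_entry_eq_of_right_unity hE (fun k => if k = i then a + c else a) j
  simp only [ite_mul, PSemiring.right_distrib, finSum_ite_add, if_neg hij.symm] at h
  rwa [finSum_mul_entry_eq_of_right_unity hE (fun _ => a) j] at h

theorem isUnity_finSum_entry_of_isUnity {E : Mat n S} (hE : IsUnity E) (i : Fin (n + 1)) :
    IsUnity (finSum (E.entry i)) := by
  refine isUnity_of_mul_eq_self (r := finSum (E.entry · i)) (fun a => ?_) (fun a => ?_)
  · rw [finSum_mul]
    exact finSum_entry_mul_eq_of_left_unity (fun A => (hE A).1) (fun _ => a) i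
  · rw [mul_finSum]
    exact finSum_mul_entry_eq_of_right_unity (fun A => (hE A).2) (fun _ => a) i

theorem isZero_entry_of_isUnity {E : Mat n S} (hE : IsUnity E) {i j : Fin (n + 1)}
    (hij : i ≠ j) : IsZero (E.entry i j) :=
  isZero_of_add_mul_eq_self (isUnity_finSum_entry_of_isUnity hE i)
    (add_entry_mul_eq_self (fun A => (hE A).1) hij)
    (add_mul_entry_eq_self (fun A => (hE A).2) hij)

theorem isUnity_diagonal {z e : S} (hz : IsZero z) (he : IsUnity e) :
    IsUnity (⟨fun i j => if i = j then e else z⟩ : Mat n S) := by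
  intro A
  constructor
  · refine ext fun i j => ?_
    have hterm : ∀ k, (if i = k then e else z) * A.entry k j =
        if k = i then A.entry i j else z := by
      intro k
      by_cases hk : k = i
      · subst hk; simp only [if_true, (he _).1]
      · simp only [Ne.symm hk, hk, if_false, (hz.1 _).2]
    simp only [mul_entry, hterm, finSum_ite_of_addNeutral hz.2]
  · refine ext fun i j => ?_
    have hterm : ∀ k, A.entry i k * (if k = j then e else z) =
        if k = j then A.entry i j else z := by
      intro k
      by_cases hk : k = j
      · subst hk; simp only [if_true, (he _).2]
      · simp only [hk, if_false, (hz.1 _).1]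
    simp only [mul_entry, hterm, finSum_ite_of_addNeutral hz.2]

end Mat

/-- for `n ≥ 2` (`Mat (n+1)` has size `n+2`), `M_n(S)` has a unity iff
`S` has a zero and a unity; the unity is then diagonal. -/
theorem stmt4 {S : Type} [PSemiring S] (n : ℕ) :
    ((∃ E : Mat (n + 1) S, IsUnity E) ↔ ((∃ z : S, IsZero z) ∧ ∃ e : S, IsUnity e)) ∧
    (∀ z e : S, IsZero z → IsUnity e →
      IsUnity (⟨fun i j => if i = j then e else z⟩ : Mat (n + 1) S)) := by
  refine ⟨⟨?_, ?_⟩, fun z e hz he => Mat.isUnity_diagonal hz he⟩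
  · rintro ⟨E, hE⟩
    exact ⟨⟨_, Mat.isZero_entry_of_isUnity hE Fin.zero_ne_one'⟩,
      ⟨_, Mat.isUnity_finSum_entry_of_isUnity hE 0⟩⟩
  · rintro ⟨⟨z, hz⟩, ⟨e, he⟩⟩
    exact ⟨_, Mat.isUnity_diagonal hz he⟩
end

section
/- Let S be a congruence-simple semiring with |S·S| ≥ 2. Then either |S| = 2 with S both multiplicatively and additively idempotent and without a multiplicatively absorbing element, or for all a ≠ b in S there exist c, d ∈ S with ca ≠ cb and ad ≠ bd. -/
/-!
The relations `∀ c, c * a = c * b` and `∀ c, a * c = b * c` are congruences. If both are the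
identity, multiplication separates points. If one of them is full, the product ignores one factor,
so `a * a = b * b` is a congruence as well; it is not full because `|S·S| ≥ 2`, hence `a * a = a`
and multiplication is a projection. Then every equivalence compatible with `+` is a congruence,
`+` is idempotent, and the congruence `x + t = y + t` shows that each `t` is additively neutral or
additively absorbing. Each kind of element occurs at most once, so `|S| = 2`.
-/

theorem AddNeutral.eq {T : Type} [AddCommMagma T] {e e' : T} (he : AddNeutral e)
    (he' : AddNeutral e') : e = e' := by
  rw [← he' e, add_comm, he e']

theorem AddAbsorbing.eq {T : Type} [AddCommMagma T] {w w' : T} (hw : AddAbsorbing w)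
    (hw' : AddAbsorbing w') : w = w' := by
  rw [← hw' w, add_comm, hw w']

theorem forall_eq_or_eq_of_addNeutral_or_addAbsorbing {T : Type} [AddCommMagma T]
    (hT : ∀ z : T, AddNeutral z ∨ AddAbsorbing z) {x y : T} (hxy : x ≠ y) :
    ∀ z : T, z = x ∨ z = y := by
  intro z
  rcases hT x with hx | hx <;> rcases hT y with hy | hy
  · exact absurd (hx.eq hy) hxy
  · rcases hT z with hz | hz
    exacts [Or.inl (hz.eq hx), Or.inr (hz.eq hy)]
  · rcases hT z with hz | hz
    exacts [Or.inr (hz.eq hy), Or.inl (hz.eq hx)]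
  · exact absurd (hx.eq hy) hxy

theorem not_exists_mulAbsorbing_of_mul_proj {T : Type} [Add T] [Mul T]
    (hproj : (∀ a b : T, a * b = a) ∨ (∀ a b : T, a * b = b)) (hne : ∃ a b : T, a ≠ b) :
    ¬∃ w : T, MulAbsorbing w := by
  rintro ⟨w, hw⟩
  obtain ⟨a, b, hab⟩ := hne
  have h_eq_w : ∀ a : T, a = w := by
    rcases hproj with hp | hp
    · exact fun a => (hp a w).symm.trans (hw a).1
    · exact fun a => (hp w a).symm.trans (hw a).2
  exact hab ((h_eq_w a).trans (h_eq_w b).symm)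

section

variable {S : Type} [PSemiring S]

theorem isCongruence_forall_mul_left_eq :
    IsCongruence (fun a b : S => ∀ c, c * a = c * b) := by
  refine ⟨⟨fun _ _ => rfl, fun h c => (h c).symm, fun h₁ h₂ c => (h₁ c).trans (h₂ c)⟩,
    ?_, ?_⟩
  · intro a b c d hab hcd e
    rw [PSemiring.left_distrib, PSemiring.left_distrib, hab, hcd]
  · intro a b c d hab hcd e
    rw [← mul_assoc, ← mul_assoc, hab, hcd]

theorem isCongruence_forall_mul_right_eq :
    IsCongruence (fun a b : S => ∀ c, a * c = b * c) := by
  refine ⟨⟨fun _ _ => rfl, fun h c => (h c).symm, fun h₁ h₂ c => (h₁ c).trans (h₂ c)⟩,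
    ?_, ?_⟩
  · intro a b c d hab hcd e
    rw [PSemiring.right_distrib, PSemiring.right_distrib, hab, hcd]
  · intro a b c d hab hcd e
    rw [mul_assoc, mul_assoc, hcd, hab]

theorem add_self_of_mul_proj (hproj : (∀ a b : S, a * b = a) ∨ (∀ a b : S, a * b = b))
    (a : S) : a + a = a := by
  rcases hproj with hp | hp
  · simpa only [hp] using (PSemiring.left_distrib a a a).symm
  · simpa only [hp] using (PSemiring.right_distrib a a a).symm

theorem isCongruence_of_mul_proj (hproj : (∀ a b : S, a * b = a) ∨ (∀ a b : S, a * b = b))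
    {r : S → S → Prop} (hr : Equivalence r)
    (hadd : ∀ a b c d : S, r a b → r c d → r (a + c) (b + d)) : IsCongruence r := by
  refine ⟨hr, hadd, fun a b c d hab hcd => ?_⟩
  rcases hproj with hp | hp
  · rwa [hp, hp]
  · rwa [hp, hp]

end

namespace CongSimple

variable {S : Type} [PSemiring S]

theorem addNeutral_or_addAbsorbing (h : CongSimple S)
    (hproj : (∀ a b : S, a * b = a) ∨ (∀ a b : S, a * b = b)) (t : S) :
    AddNeutral t ∨ AddAbsorbing t := by
  have hidem := add_self_of_mul_proj hproj
  have hshift : ∀ x y : S, (x + y) + t = (x + t) + (y + t) := fun x y => by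
    rw [add_add_add_comm, hidem]
  have hcong : IsCongruence (fun x y : S => x + t = y + t) :=
    isCongruence_of_mul_proj hproj ⟨fun _ => rfl, Eq.symm, Eq.trans⟩
      fun a b c d hab hcd => by rw [hshift a, hshift b, hab, hcd]
  rcases h.2 _ hcong with hid | hfull
  · exact Or.inl fun x => (hid _ x).mp (by rw [add_assoc, hidem])
  · exact Or.inr fun x => (hfull x t).trans (hidem t)

theorem two_element_of_mul_proj (h : CongSimple S)
    (hproj : (∀ a b : S, a * b = a) ∨ (∀ a b : S, a * b = b)) :
    (∃ x y : S, x ≠ y ∧ ∀ z : S, z = x ∨ z = y) ∧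
      (∀ a : S, a + a = a ∧ a * a = a) ∧ ¬∃ w : S, MulAbsorbing w := by
  obtain ⟨x, y, hxy⟩ := h.1
  refine ⟨⟨x, y, hxy, forall_eq_or_eq_of_addNeutral_or_addAbsorbing
    (h.addNeutral_or_addAbsorbing hproj) hxy⟩, fun a => ⟨add_self_of_mul_proj hproj a, ?_⟩,
    not_exists_mulAbsorbing_of_mul_proj hproj h.1⟩
  rcases hproj with hp | hp <;> exact hp a a

theorem mul_eq_left (h : CongSimple S) (hSS : ∃ a b c d : S, a * b ≠ c * d)
    (hl : ∀ a b c : S, a * b = a * c) (a b : S) : a * b = a := by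
  have hsq_add : ∀ x y : S, (x + y) * (x + y) = x * x + y * y := fun x y => by
    rw [PSemiring.right_distrib, hl x (x + y) x, hl y (x + y) y]
  have hcong : IsCongruence (fun x y : S => x * x = y * y) := by
    refine ⟨⟨fun _ => rfl, Eq.symm, Eq.trans⟩, fun a b c d hab hcd => ?_,
      fun a b c d hab _ => ?_⟩ <;> beta_reduce
    · rw [hsq_add, hsq_add, hab, hcd]
    · rw [hl a c a, hl b d b, hab]
  rcases h.2 _ hcong with hid | hfull
  · have hsq : a * a = a := (hid _ a).mp <| by rw [hl (a * a) (a * a) a, mul_assoc, hl a (a * a) a]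
    rw [hl a b a, hsq]
  · obtain ⟨a, b, c, d, hne⟩ := hSS
    exact absurd (by rw [hl a b a, hl c d c, hfull]) hne

theorem mul_eq_right (h : CongSimple S) (hSS : ∃ a b c d : S, a * b ≠ c * d)
    (hr : ∀ a b c : S, a * c = b * c) (a b : S) : a * b = b := by
  have hsq_add : ∀ x y : S, (x + y) * (x + y) = x * x + y * y := fun x y => by
    rw [PSemiring.left_distrib, hr (x + y) x x, hr (x + y) y y]
  have hcong : IsCongruence (fun x y : S => x * x = y * y) := by
    refine ⟨⟨fun _ => rfl, Eq.symm, Eq.trans⟩, fun a b c d hab hcd => ?_,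
      fun a b c d _ hcd => ?_⟩ <;> beta_reduce
    · rw [hsq_add, hsq_add, hab, hcd]
    · rw [hr a c c, hr b d d, hcd]
  rcases h.2 _ hcong with hid | hfull
  · have hsq : b * b = b := (hid _ b).mp <| by rw [hr (b * b) b (b * b), ← mul_assoc, hr _ b b]
    rw [hr a b b, hsq]
  · obtain ⟨a, b, c, d, hne⟩ := hSS
    exact absurd (by rw [hr a b b, hr c d d, hfull]) hne

end CongSimple

/-- a congruence-simple semiring with `|S·S| ≥ 2` is either the
two-element additively and multiplicatively idempotent semiring without a
multiplicatively absorbing element, or multiplication separates points from both sides. -/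
theorem stmt7 {S : Type} [PSemiring S] (h : CongSimple S)
    (hSS : ∃ a b c d : S, a * b ≠ c * d) :
    ((∃ x y : S, x ≠ y ∧ ∀ z : S, z = x ∨ z = y) ∧
      (∀ a : S, a + a = a ∧ a * a = a) ∧ ¬∃ w : S, MulAbsorbing w) ∨
    (∀ a b : S, a ≠ b → ∃ c d : S, c * a ≠ c * b ∧ a * d ≠ b * d) := by
  rcases h.2 _ isCongruence_forall_mul_left_eq with hL | hL
  · rcases h.2 _ isCongruence_forall_mul_right_eq with hR | hR
    · refine Or.inr fun a b hab => ?_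
      obtain ⟨c, hc⟩ := not_forall.mp (mt (hL a b).mp hab)
      obtain ⟨d, hd⟩ := not_forall.mp (mt (hR a b).mp hab)
      exact ⟨c, d, hc, hd⟩
    · exact Or.inl <| h.two_element_of_mul_proj <| Or.inr <| h.mul_eq_right hSS hR
  · exact Or.inl <| h.two_element_of_mul_proj <| Or.inl <|
      h.mul_eq_left hSS fun a b c => hL b c a
end

section
/- Let S be a semiring with a multiplicatively absorbing element such that S is congruence-simple, S contains no bi-absorbing element, and |S·S| ≥ 2. Then S has a zero element (i.e., the multiplicatively absorbing element is additively neutral). -/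
/-!
Since `w` absorbs products, `w + w = w * (w + w) = w`, and then `a ~ b :↔ a + w = b + w` is a
congruence. By congruence-simplicity it is either the identity, and `a ~ a + w` makes `w`
additively neutral, or the full relation, and `a ~ w` makes `w` bi-absorbing.
-/

namespace MulAbsorbing

variable {S : Type} [PSemiring S] {w : S}

theorem add_self (hw : MulAbsorbing w) : w + w = w := by
  calc w + w = w * w + w * w := by rw [(hw w).1]
    _ = w * (w + w) := (PSemiring.left_distrib w w w).symm
    _ = w := (hw (w + w)).2

theorem add_add_eq (hw : MulAbsorbing w) (a b : S) : a + b + w = (a + w) + (b + w) := by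
  calc a + b + w = a + b + (w + w) := by rw [hw.add_self]
    _ = (a + w) + (b + w) := by rw [add_assoc, add_assoc, add_left_comm b w w]

theorem mul_add_eq (hw : MulAbsorbing w) (a b : S) : a * b + w = (a + w) * (b + w) := by
  calc a * b + w = a * b + (w + w) := by rw [hw.add_self]
    _ = a * b + a * w + w * (b + w) := by rw [(hw a).1, (hw (b + w)).2, add_assoc]
    _ = (a + w) * (b + w) := by
      rw [← PSemiring.left_distrib, ← PSemiring.right_distrib]

theorem isCongruence_add_eq_add (hw : MulAbsorbing w) :
    IsCongruence (fun a b : S => a + w = b + w) := by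
  refine ⟨⟨fun _ => rfl, Eq.symm, Eq.trans⟩, ?_, ?_⟩
  · intro a b c d hab hcd
    rw [hw.add_add_eq, hw.add_add_eq b, hab, hcd]
  · intro a b c d hab hcd
    rw [hw.mul_add_eq, hw.mul_add_eq b, hab, hcd]

end MulAbsorbing

theorem stmt9_general {S : Type} [PSemiring S] (w : S) (hw : MulAbsorbing w)
    (h1 : CongSimple S) (h2 : ¬∃ o : S, BiAbsorbing o) :
    IsZero w := by
  rcases h1.2 _ hw.isCongruence_add_eq_add with hid | hfull
  · refine ⟨hw, fun a => ((hid a (a + w)).mp ?_).symm⟩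
    rw [add_assoc, hw.add_self]
  · refine absurd ⟨w, hw, fun a => ?_⟩ h2
    simpa only [hw.add_self] using hfull a w

/-- a multiplicatively absorbing element of a congruence-simple
semiring without bi-absorbing element and with `|S·S| ≥ 2` is a zero. -/
theorem stmt9 {S : Type} [PSemiring S] (w : S) (hw : MulAbsorbing w)
    (h1 : CongSimple S) (h2 : ¬∃ o : S, BiAbsorbing o)
    (h3 : ∃ a b c d : S, a * b ≠ c * d) :
    IsZero w :=
  stmt9_general w hw h1 h2
end

section
/- Let S be a semiring, n ≥ 1, and I a bi-ideal of M_n(S). Then there exists a ∈ S such that the constant matrix ā (all entries equal to a) lies in I. Moreover, if a ∈ S satisfies ā ∈ I and a + S = S, then I = M_n(S). -/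
/-!
Multiplying any member `A` of `I` by the constant matrix `c̄` on both sides gives a constant
matrix, since `c̄ A` has equal rows and multiplying it on the right by `c̄` equalises the columns.
If `ā ∈ I` and `a + S = S`, every matrix is `ā + M` for a suitable `M`, so `I` is everything.
-/

theorem IsBiIdeal.mul_mul_mem {T : Type} [Add T] [Mul T] {I : Set T} (hI : IsBiIdeal I)
    {x : T} (hx : x ∈ I) (s t : T) : s * x * t ∈ I :=
  (hI.2 _ (hI.2 x hx s).2.2 t).2.1

theorem IsBiIdeal.eq_univ_of_add_surjective {T : Type} [Add T] [Mul T] {I : Set T}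
    (hI : IsBiIdeal I) {x : T} (hx : x ∈ I) (hsurj : Function.Surjective (x + ·)) :
    I = Set.univ :=
  Set.eq_univ_of_forall fun y => by
    obtain ⟨s, rfl⟩ := hsurj y
    exact (hI.2 x hx s).1

namespace Mat

variable {n : ℕ} {S : Type}

theorem const_mul_mul_const [Add S] [Mul S] (a b : S) (A : Mat n S) :
    const n a * A * const n b =
      const n (finSum fun k => finSum (fun l => a * A.entry l k) * b) :=
  rfl

theorem const_add_surjective [Add S] {a : S} (h : Function.Surjective (a + ·)) :
    Function.Surjective (const n a + ·) := by
  choose g hg using h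
  rintro ⟨B⟩
  refine ⟨⟨fun i j => g (B i j)⟩, ?_⟩
  change (⟨fun i j => a + g (B i j)⟩ : Mat n S) = ⟨B⟩
  simp only [hg]

end Mat

/-- every bi-ideal of `M_n(S)` contains some constant matrix `ā`;
if moreover `a + S = S`, then `I = M_n(S)`. -/
theorem stmt12 {S : Type} [PSemiring S] (n : ℕ) (I : Set (Mat n S))
    (hI : IsBiIdeal I) :
    (∃ a : S, Mat.const n a ∈ I) ∧
    (∀ a : S, Mat.const n a ∈ I → (∀ b : S, ∃ s : S, a + s = b) → I = Set.univ) := by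
  refine ⟨?_, fun a ha hsurj => hI.eq_univ_of_add_surjective ha (Mat.const_add_surjective hsurj)⟩
  obtain ⟨A, hA⟩ := hI.1
  let c := A.entry 0 0
  exact ⟨_, Mat.const_mul_mul_const c c A ▸ hI.mul_mul_mem hA _ _⟩
end

section
/- Let S be a semiring, n ≥ 2, and suppose M_n(S) is bi-ideal-simple. Then S is bi-ideal-free (the only bi-ideal of S is S itself). -/
/-!
If `I` is a bi-ideal of `S`, the matrices with all entries in `I` form a bi-ideal of `M_n(S)`.
It cannot be all of `M_n(S)` unless `I = S`, and if it is a singleton then so is `I = {w}`, which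
makes `w` bi-absorbing. But then the matrices whose `(0,0)` entry is `w` form a bi-ideal of
`M_n(S)` that is neither a singleton (`n ≥ 2` leaves other entries free) nor everything
(`S` has an element `c ≠ w`).
-/

namespace Mat

variable {n : ℕ} {S : Type}

lemma ext_entry {A B : Mat n S} (h : ∀ i j, A.entry i j = B.entry i j) : A = B := by
  cases A; cases B
  congr
  funext i j
  exact h i j

lemma const_injective : Function.Injective (Mat.const n : S → Mat n S) :=
  fun _ _ h => congrFun (congrFun (congrArg Mat.entry h) 0) 0

lemma nontrivial_of_exists_ne (h : ∃ A B : Mat n S, A ≠ B) : Nontrivial S := by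
  obtain ⟨A, B, hAB⟩ := h
  by_contra! hS
  exact hAB (ext_entry fun i j => Subsingleton.elim _ _)

def entrywise (n : ℕ) (I : Set S) : Set (Mat n S) := {M | ∀ i j, M.entry i j ∈ I}

lemma const_mem_entrywise {I : Set S} {a : S} (ha : a ∈ I) : Mat.const n a ∈ entrywise n I :=
  fun _ _ => ha

end Mat

lemma finSum_mem {S : Type} [Add S] {I : Set S} (hI : ∀ x ∈ I, ∀ s : S, x + s ∈ I) :
    ∀ {m : ℕ} (f : Fin (m + 1) → S), (∀ k, f k ∈ I) → finSum f ∈ I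
  | 0, _, hf => hf 0
  | _ + 1, f, hf => hI _ (finSum_mem hI (fun i => f i.castSucc) (fun _ => hf _)) _

lemma finSum_eq_of_addAbsorbing {S : Type} [AddCommSemigroup S] {w : S} (hw : AddAbsorbing w) :
    ∀ {m : ℕ} (f : Fin (m + 1) → S) (k : Fin (m + 1)), f k = w → finSum f = w
  | 0, _, k, hk => by rwa [Fin.fin_one_eq_zero k] at hk
  | m + 1, f, k, hk => by
    change finSum (fun i : Fin (m + 1) => f i.castSucc) + f (Fin.last (m + 1)) = w
    by_cases hlast : k = Fin.last (m + 1)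
    · rw [← hlast, hk]
      exact hw _
    · obtain ⟨j, rfl⟩ := Fin.exists_castSucc_eq.2 hlast
      rw [finSum_eq_of_addAbsorbing hw (fun i => f i.castSucc) j hk, add_comm]
      exact hw _

section BiIdeal

variable {S : Type}

lemma IsBiIdeal.entrywise [Add S] [Mul S] {I : Set S} (hI : IsBiIdeal I) (n : ℕ) :
    IsBiIdeal (Mat.entrywise n I) := by
  obtain ⟨⟨w, hw⟩, hclos⟩ := hI
  have hadd : ∀ x ∈ I, ∀ s : S, x + s ∈ I := fun x hx s => (hclos x hx s).1
  refine ⟨⟨Mat.const n w, Mat.const_mem_entrywise hw⟩, fun A hA M => ⟨?_, ?_, ?_⟩⟩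
  · exact fun i j => hadd _ (hA i j) _
  · exact fun i j => finSum_mem hadd _ fun k => (hclos _ (hA i k) (M.entry k j)).2.1
  · exact fun i j => finSum_mem hadd _ fun k => (hclos _ (hA k j) (M.entry i k)).2.2

lemma eq_univ_of_entrywise_eq_univ {n : ℕ} {I : Set S} (h : Mat.entrywise n I = Set.univ) :
    I = Set.univ :=
  Set.eq_univ_of_forall fun s =>
    (h.symm ▸ Set.mem_univ (Mat.const n s) : Mat.const n s ∈ Mat.entrywise n I) 0 0

lemma IsBiIdeal.eq_singleton_of_entrywise_eq_singleton [Add S] [Mul S] {n : ℕ} {I : Set S}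
    (hI : IsBiIdeal I) {W : Mat n S} (h : Mat.entrywise n I = {W}) : ∃ w, I = {w} := by
  obtain ⟨w, hw⟩ := hI.1
  refine ⟨w, Set.eq_singleton_iff_unique_mem.2 ⟨hw, fun x hx => Mat.const_injective (n := n) ?_⟩⟩
  have hmem : ∀ y ∈ I, Mat.const n y = W := fun y hy => by
    simpa [h] using Mat.const_mem_entrywise (n := n) hy
  rw [hmem x hx, hmem w hw]

lemma IsBiIdeal.biAbsorbing_of_singleton [AddCommSemigroup S] [Mul S] {w : S}
    (h : IsBiIdeal ({w} : Set S)) : BiAbsorbing w :=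
  ⟨fun a => ⟨(h.2 w rfl a).2.2, (h.2 w rfl a).2.1⟩,
    fun a => (add_comm a w).trans (h.2 w rfl a).1⟩

lemma isBiIdeal_setOf_entry_eq [AddCommSemigroup S] [Mul S] {n : ℕ} {w : S}
    (hw : BiAbsorbing w) (i : Fin (n + 1)) : IsBiIdeal {M : Mat n S | M.entry i i = w} := by
  refine ⟨⟨Mat.const n w, rfl⟩, fun A (hA : A.entry i i = w) M => ⟨?_, ?_, ?_⟩⟩
  · change A.entry i i + M.entry i i = w
    rw [hA, add_comm]
    exact hw.2 _
  · exact finSum_eq_of_addAbsorbing hw.2 _ i (by rw [hA]; exact (hw.1 _).2)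
  · exact finSum_eq_of_addAbsorbing hw.2 _ i (by rw [hA]; exact (hw.1 _).1)

lemma not_biIdealSimple_of_biAbsorbing [AddCommSemigroup S] [Mul S] {n : ℕ} {w c : S}
    (hw : BiAbsorbing w) (hc : c ≠ w) : ¬ BiIdealSimple (Mat (n + 1) S) := by
  rintro ⟨-, hsimple⟩
  rcases hsimple _ (isBiIdeal_setOf_entry_eq hw 0) with ⟨W, hW⟩ | hU
  · let N : Mat (n + 1) S := ⟨fun _ j => if j = 0 then w else c⟩
    have hN : N ∈ ({W} : Set (Mat (n + 1) S)) := by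
      rw [← hW]
      show (if (0 : Fin (n + 2)) = 0 then w else c) = w
      exact if_pos rfl
    have hconst : Mat.const (n + 1) w ∈ ({W} : Set (Mat (n + 1) S)) := hW ▸ rfl
    have hentry := congrFun (congrFun (congrArg Mat.entry (hconst.trans hN.symm)) 1) 1
    exact hc (by simpa [Mat.const, N] using hentry.symm)
  · exact hc (hU.symm ▸ Set.mem_univ (Mat.const (n + 1) c) :
      Mat.const (n + 1) c ∈ {M : Mat (n + 1) S | M.entry 0 0 = w})

end BiIdeal

/-- if `M_n(S)` is bi-ideal-simple for some `n ≥ 2` (`Mat (n+1)` has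
size `n+2`), then `S` is bi-ideal-free. -/
theorem stmt13 {S : Type} [PSemiring S] (n : ℕ)
    (h : BiIdealSimple (Mat (n + 1) S)) :
    BiIdealFree S := by
  have : Nontrivial S := Mat.nontrivial_of_exists_ne h.1
  refine ⟨exists_pair_ne S, fun I hI => ?_⟩
  rcases h.2 _ (hI.entrywise (n + 1)) with ⟨W, hW⟩ | hU
  · obtain ⟨w, rfl⟩ := hI.eq_singleton_of_entrywise_eq_singleton hW
    obtain ⟨c, hc⟩ := exists_ne w
    exact absurd h (not_biIdealSimple_of_biAbsorbing hI.biAbsorbing_of_singleton hc)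
  · exact eq_univ_of_entrywise_eq_univ hU
end

section
/- Let S be an additively archimedean semiring that is additively uniquely m-divisible for some m ≥ 2. Then for all a, b ∈ S there exists c ∈ S with c ≤_S a and c ≤_S b. -/
/-!
If `a ≤_S (k+1)·b` with `k ≥ 1`, write `a = m·a'`. Since `(k+1)·b ≤_S m·(k·b)` and unique
`m`-divisibility lets one cancel the factor `m` on both sides of `≤_S`, we get `a' ≤_S k·b`,
while `a' ≤_S a`. Descending in `k` down to `a ≤_S b` gives a common lower bound of `a` and `b`;
the archimedean property provides the starting `k`.
-/

section AddPow
variable {S : Type} [AddCommSemigroup S]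

lemma leS_trans {a b c : S} (hab : leS a b) (hbc : leS b c) : leS a c := by
  rcases hab with rfl | ⟨x, rfl⟩
  · exact hbc
  rcases hbc with rfl | ⟨y, rfl⟩
  · exact Or.inr ⟨x, rfl⟩
  · exact Or.inr ⟨x + y, (add_assoc a x y).symm⟩

lemma leS_add_left {a b : S} (z : S) (h : leS a b) : leS (z + a) (z + b) := by
  rcases h with rfl | ⟨x, rfl⟩
  · exact Or.inl rfl
  · exact Or.inr ⟨x, add_assoc z a x⟩

lemma leS_addPow_self (n : ℕ) (x : S) : leS x (addPow n x) := by
  cases n with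
  | zero => exact Or.inl rfl
  | succ n => exact Or.inr ⟨addPow n x, add_comm x (addPow n x)⟩

lemma addPow_add (n : ℕ) (x y : S) : addPow n (x + y) = addPow n x + addPow n y := by
  induction n with
  | zero => rfl
  | succ n ih =>
    show addPow n (x + y) + (x + y) = (addPow n x + x) + (addPow n y + y)
    rw [ih, add_add_add_comm]

lemma addPow_succ_leS_addPow_addPow (m k : ℕ) (b : S) :
    leS (addPow (k + 1) b) (addPow (m + 1) (addPow k b)) := by
  have hb : leS b (addPow m (addPow k b)) :=
    leS_trans (leS_addPow_self k b) (leS_addPow_self m (addPow k b))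
  rw [show addPow (m + 1) (addPow k b) = addPow k b + addPow m (addPow k b) from add_comm _ _]
  exact leS_add_left (addPow k b) hb

lemma leS_of_addPow_leS_addPow {n : ℕ} (hdiv : ∀ a : S, ∃! b : S, a = addPow n b) {x y : S}
    (h : leS (addPow n x) (addPow n y)) : leS x y := by
  rcases h with h | ⟨c, hc⟩
  · exact Or.inl ((hdiv (addPow n y)).unique h.symm rfl)
  · obtain ⟨c', rfl, -⟩ := hdiv c
    have hy : addPow n y = addPow n (x + c') := by rw [addPow_add, hc]
    exact Or.inr ⟨c', (hdiv (addPow n y)).unique hy rfl⟩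

lemma exists_leS_leS_of_leS_addPow {m : ℕ} (hdiv : ∀ a : S, ∃! b : S, a = addPow (m + 1) b)
    (b : S) (k : ℕ) : ∀ a : S, leS a (addPow k b) → ∃ c : S, leS c a ∧ leS c b := by
  induction k with
  | zero => exact fun a hab => ⟨a, Or.inl rfl, hab⟩
  | succ k ih =>
    intro a hab
    obtain ⟨a', rfl, -⟩ := hdiv a
    have ha' : leS a' (addPow k b) :=
      leS_of_addPow_leS_addPow hdiv (leS_trans hab (addPow_succ_leS_addPow_addPow m k b))
    obtain ⟨c, hca', hcb⟩ := ih a' ha'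
    exact ⟨c, leS_trans hca' (leS_addPow_self (m + 1) a'), hcb⟩

end AddPow

/-- an additively archimedean, additively uniquely `m`-divisible
(`m ≥ 2`, here `m = m₀ + 2` via `addPow (m₀+1) b = (m₀+2)·b`) semiring has a
downwards directed `≤_S`. -/
theorem stmt17 {S : Type} [PSemiring S]
    (harch : ∀ a b : S, ∃ m : ℕ, leS a (addPow m b))
    (m : ℕ) (hdiv : ∀ a : S, ∃! b : S, a = addPow (m + 1) b) :
    ∀ a b : S, ∃ c : S, leS c a ∧ leS c b := by
  intro a b
  obtain ⟨k, hk⟩ := harch a b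
  exact exists_leS_leS_of_leS_addPow hdiv b k a hk
end
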